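/- Let α₁, …, α_d ∈ ℂ(x)* with d ≥ 2 be such that no quotient α_i/α_j (i ≠ j) is constant, and let f₁, …, f_d ∈ ℂ(x)*. Suppose S is a finite set of places of ℂ(x) containing all zeros and poles of all α_i and f_i. Then there exists an effectively computable constant C such that if G_n := f₁α₁^n + ⋯ + f_dα_d^n is an S-unit (nonzero with all zeros and poles in S), then n ≤ C. -/

import Mathlib

open Polynomial

/-- The places of ℂ(x): `some c` is the finite place at `c`, `none` is the place at infinity. -/
noncomputable def nu (v : Option ℂ) (f : RatFunc ℂ) : ℤ :=
  match v with
  | some c => (f.num.rootMultiplicity c : ℤ) - (f.denom.rootMultiplicity c : ℤ)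
  | none => (f.denom.natDegree : ℤ) - (f.num.natDegree : ℤ)

/-- The height of a rational function: `H f = -∑_ν min (0, ν f)`. -/
noncomputable def H (f : RatFunc ℂ) : ℤ := -∑ᶠ v : Option ℂ, min 0 (nu v f)

/-!
With `h k = f k * α k ^ n` and `G = ∑ k, h k`, the Wronskian `W` of the `h k` with respect to
`d/dX` is `∏ k, α k ^ n` times `P(n)`, where `P` is a polynomial whose coefficient of degree
`0 + 1 + ⋯ + (d - 1)` is `∏ k, f k` times the Vandermonde determinant of the logarithmic
derivatives `α k′ / α k`. These are distinct because no `α i / α j` is constant, so `W ≠ 0` for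
all large `n`.

Replacing `h i` by `G` does not change `W`, and dividing each column by its top entry leaves the
log-Wronskian `L i`, with entries `c⁽ᵐ⁾ / c` for `S`-units `c`. Such an entry has poles only in
`S`, of order at most `m < d`, so `H (L i) ≤ d² |S|`. Comparing the factorizations for two indices
`i ≠ j` gives `(α i / α j) ^ n = f j L i / (f i L j)`, whose height is bounded independently of
`n`, while `H ((α i / α j) ^ n) = n H (α i / α j) ≥ n`.
-/

open scoped Differential

namespace RatFunc

variable {K : Type*} [Field K]

/-- The quotient rule, applied to the reduced representation `f = num f / denom f`. -/
noncomputable def derivAux (f : RatFunc K) : RatFunc K :=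
  algebraMap K[X] (RatFunc K) (derivative f.num * f.denom - f.num * derivative f.denom) /
    algebraMap K[X] (RatFunc K) (f.denom ^ 2)

lemma derivAux_div (p : K[X]) {q : K[X]} (hq : q ≠ 0) :
    derivAux (algebraMap K[X] (RatFunc K) p / algebraMap K[X] (RatFunc K) q) =
      (algebraMap K[X] (RatFunc K) (derivative p) * algebraMap K[X] (RatFunc K) q -
        algebraMap K[X] (RatFunc K) p * algebraMap K[X] (RatFunc K) (derivative q)) /
        algebraMap K[X] (RatFunc K) q ^ 2 := by
  set f := algebraMap K[X] (RatFunc K) p / algebraMap K[X] (RatFunc K) q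
  have hcross : f.num * q = p * f.denom := (num_mul_eq_mul_denom_iff hq).mpr rfl
  have hcross' := congrArg derivative hcross
  simp only [derivative_mul] at hcross'
  rw [derivAux, div_eq_div_iff (algebraMap_ne_zero (pow_ne_zero 2 f.denom_ne_zero))
    (pow_ne_zero 2 (algebraMap_ne_zero hq))]
  simp only [← map_pow, ← map_mul, ← map_sub]
  congr 1
  linear_combination (q * f.denom) * hcross' -
    (derivative f.denom * q + derivative q * f.denom) * hcross

lemma derivAux_algebraMap (p : K[X]) :
    derivAux (algebraMap K[X] (RatFunc K) p) = algebraMap K[X] (RatFunc K) (derivative p) := by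
  simpa using derivAux_div p one_ne_zero

lemma exists_eq_div (f : RatFunc K) : ∃ p q : K[X], q ≠ 0 ∧
    f = algebraMap K[X] (RatFunc K) p / algebraMap K[X] (RatFunc K) q :=
  ⟨f.num, f.denom, f.denom_ne_zero, (num_div_denom f).symm⟩

lemma derivAux_add (f g : RatFunc K) : derivAux (f + g) = derivAux f + derivAux g := by
  obtain ⟨a, b, hb, rfl⟩ := exists_eq_div f
  obtain ⟨c, e, he, rfl⟩ := exists_eq_div g
  have hb' := algebraMap_ne_zero hb
  have he' := algebraMap_ne_zero he
  rw [div_add_div _ _ hb' he', ← map_mul, ← map_mul, ← map_mul, ← map_add,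
    derivAux_div _ (mul_ne_zero hb he), derivAux_div _ hb, derivAux_div _ he]
  simp only [map_add, map_mul, derivative_mul]
  field_simp
  ring

lemma derivAux_mul (f g : RatFunc K) : derivAux (f * g) = f * derivAux g + g * derivAux f := by
  obtain ⟨a, b, hb, rfl⟩ := exists_eq_div f
  obtain ⟨c, e, he, rfl⟩ := exists_eq_div g
  have hb' := algebraMap_ne_zero hb
  have he' := algebraMap_ne_zero he
  rw [div_mul_div_comm, ← map_mul, ← map_mul,
    derivAux_div _ (mul_ne_zero hb he), derivAux_div _ hb, derivAux_div _ he]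
  simp only [map_mul, derivative_mul, map_add]
  field_simp
  ring

noncomputable instance : Differential (RatFunc K) where
  deriv :=
    -- `RatFunc K` has its own `Algebra ℤ` instance (via `K[X]`), which is not reducibly
    -- defeq to the `Ring.toIntAlgebra` in the type of `Differential.deriv`.
    letI : Algebra ℤ (RatFunc K) := Ring.toIntAlgebra _
    { toFun := derivAux
      map_add' := derivAux_add
      map_smul' := fun n f => by
        rw [RingHom.id_apply, zsmul_eq_mul, zsmul_eq_mul, derivAux_mul,
          ← map_intCast (algebraMap K[X] (RatFunc K)), derivAux_algebraMap]
        simp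
      map_one_eq_zero' := by
        change derivAux 1 = 0
        rw [← map_one (algebraMap K[X] (RatFunc K)), derivAux_algebraMap, derivative_one,
          map_zero]
      leibniz' := derivAux_mul }

lemma deriv_apply (f : RatFunc K) : f′ = derivAux f := rfl

lemma exists_eq_C_of_deriv_eq_zero [CharZero K] {f : RatFunc K} (h : f′ = 0) :
    ∃ c : K, f = C c := by
  have hkey : derivative f.num * f.denom = f.num * derivative f.denom := by
    rw [deriv_apply, derivAux, div_eq_zero_iff, map_eq_zero_iff _ (algebraMap_injective K),
      map_eq_zero_iff _ (algebraMap_injective K), sub_eq_zero] at h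
    exact h.resolve_right (pow_ne_zero 2 f.denom_ne_zero)
  have hdvd : f.denom ∣ derivative f.denom :=
    (isCoprime_num_denom f).symm.dvd_of_dvd_mul_right
      ⟨derivative f.num, by linear_combination -hkey⟩
  have hdenom : f.denom = 1 := by
    refine f.monic_denom.natDegree_eq_zero.mp (by_contra fun hne => ?_)
    have := natDegree_le_of_dvd hdvd fun h0 => hne (derivative_eq_zero.mp h0)
    have := natDegree_derivative_lt hne
    omega
  have hnum : derivative f.num = 0 := by simpa [hdenom] using hkey
  obtain ⟨c, hc⟩ := natDegree_eq_zero.mp (derivative_eq_zero.mp hnum)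
  refine ⟨c, ?_⟩
  rw [← num_div_denom f, hdenom, ← hc, map_one, div_one, algebraMap_C]

lemma injective_logDeriv [CharZero K] {d : ℕ} {α : Fin d → RatFunc K} (hα : ∀ i, α i ≠ 0)
    (hnd : ∀ i j, i ≠ j → ∀ c : K, α i / α j ≠ C c) :
    Function.Injective fun i => Differential.logDeriv (α i) := fun i j hij => by
  by_contra hne
  have hq : (α i / α j)′ = 0 := by
    rw [← Differential.logDeriv_eq_zero, Differential.logDeriv_div _ _ (hα i) (hα j)]
    exact sub_eq_zero.mpr hij
  obtain ⟨c, hc⟩ := exists_eq_C_of_deriv_eq_zero hq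
  exact hnd i j hne c hc

end RatFunc

lemma Polynomial.coeff_prod_of_natDegree_le_sum {R ι : Type*} [CommSemiring R] [DecidableEq ι]
    (s : Finset ι) (p : ι → R[X]) (e : ι → ℕ) (h : ∀ i ∈ s, (p i).natDegree ≤ e i) :
    (∏ i ∈ s, p i).coeff (∑ i ∈ s, e i) = ∏ i ∈ s, (p i).coeff (e i) := by
  induction s using Finset.induction with
  | empty => simp
  | insert a s ha ih =>
    have hs : ∀ i ∈ s, (p i).natDegree ≤ e i := fun i hi => h i (Finset.mem_insert_of_mem hi)
    rw [Finset.prod_insert ha, Finset.sum_insert ha, Finset.prod_insert ha,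
      coeff_mul_add_eq_of_natDegree_le (h a (Finset.mem_insert_self a s))
        ((natDegree_prod_le _ _).trans (Finset.sum_le_sum hs)), ih hs]

namespace Differential

variable {R : Type*} [Field R] [Differential R]

/-- For `β = logDeriv a`, the `m`-th derivative of `g * a ^ n` is `a ^ n` times this polynomial
evaluated at `n`. -/
noncomputable def iterDerivPoly (β g : R) : ℕ → R[X]
  | 0 => C g
  | m + 1 => mapCoeffs (iterDerivPoly β g m) + C β * X * iterDerivPoly β g m

lemma natDegree_mapCoeffs_le (p : R[X]) : (mapCoeffs p).natDegree ≤ p.natDegree :=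
  natDegree_le_iff_coeff_eq_zero.mpr fun j hj => by
    rw [coeff_mapCoeffs, coeff_eq_zero_of_natDegree_lt hj, map_zero]

lemma natDegree_iterDerivPoly_le (β g : R) (m : ℕ) : (iterDerivPoly β g m).natDegree ≤ m := by
  induction m with
  | zero => simp [iterDerivPoly]
  | succ m ih =>
    refine (natDegree_add_le _ _).trans (max_le ((natDegree_mapCoeffs_le _).trans (by omega)) ?_)
    refine natDegree_mul_le.trans ?_
    have : (C β * X : R[X]).natDegree ≤ 1 := (natDegree_C_mul_le β X).trans natDegree_X_le
    omega

lemma coeff_iterDerivPoly_self (β g : R) (m : ℕ) : (iterDerivPoly β g m).coeff m = g * β ^ m := by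
  induction m with
  | zero => simp [iterDerivPoly]
  | succ m ih =>
    rw [iterDerivPoly, coeff_add, coeff_mapCoeffs, coeff_eq_zero_of_natDegree_lt
      ((natDegree_iterDerivPoly_le β g m).trans_lt m.lt_succ_self), map_zero, zero_add,
      mul_assoc, coeff_C_mul, coeff_X_mul, ih, pow_succ]
    ring

lemma iterate_deriv_mul_pow {a : R} (ha : a ≠ 0) (g : R) (n m : ℕ) :
    (deriv : R → R)^[m] (g * a ^ n) = a ^ n * (iterDerivPoly (logDeriv a) g m).eval (n : R) := by
  induction m with
  | zero => simp [iterDerivPoly, mul_comm]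
  | succ m ih =>
    have hpow : (a ^ n)′ = a ^ n * (n * logDeriv a) := by
      rw [← logDeriv_pow, logDeriv, mul_div_cancel₀ _ (pow_ne_zero n ha)]
    have heval : ((iterDerivPoly (logDeriv a) g m).eval (n : R))′ =
        (mapCoeffs (iterDerivPoly (logDeriv a) g m)).eval (n : R) := by
      simpa [Derivation.map_natCast] using deriv_aeval_eq (n : R) (iterDerivPoly (logDeriv a) g m)
    rw [Function.iterate_succ_apply', ih, Derivation.leibniz, heval, hpow, iterDerivPoly,
      eval_add, eval_mul, eval_mul, eval_C, eval_X, smul_eq_mul, smul_eq_mul]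
    ring

variable {d : ℕ}

noncomputable def wronskian (c : Fin d → R) : R :=
  (Matrix.of fun m k : Fin d => (deriv : R → R)^[m] (c k)).det

noncomputable def wronskianPoly (β g : Fin d → R) : R[X] :=
  (Matrix.of fun m k : Fin d => iterDerivPoly (β k) (g k) m).det

lemma wronskian_mul_pow (g a : Fin d → R) (ha : ∀ k, a k ≠ 0) (n : ℕ) :
    wronskian (fun k => g k * a k ^ n) =
      (∏ k, a k ^ n) * (wronskianPoly (fun k => logDeriv (a k)) g).eval (n : R) := by
  rw [wronskian, wronskianPoly, ← coe_evalRingHom, RingHom.map_det, ← Matrix.det_mul_row]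
  congr 1
  ext m k
  exact iterate_deriv_mul_pow (ha k) (g k) n m

lemma coeff_wronskianPoly (β g : Fin d → R) :
    (wronskianPoly β g).coeff (∑ m : Fin d, (m : ℕ)) =
      (∏ k, g k) * (Matrix.vandermonde β).det := by
  rw [← Matrix.det_transpose, ← Matrix.det_mul_row, wronskianPoly, Matrix.det_apply,
    finsetSum_coeff, Matrix.det_apply]
  refine Finset.sum_congr rfl fun σ _ => ?_
  simp only [Matrix.of_apply]
  rw [coeff_smul, ← Equiv.sum_comp σ, coeff_prod_of_natDegree_le_sum _ _ _
    fun k _ => natDegree_iterDerivPoly_le _ _ _]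
  simp [coeff_iterDerivPoly_self, Matrix.vandermonde_apply]

lemma wronskianPoly_ne_zero {β g : Fin d → R} (hβ : Function.Injective β) (hg : ∀ k, g k ≠ 0) :
    wronskianPoly β g ≠ 0 := fun h0 => by
  have := coeff_wronskianPoly β g
  rw [h0, coeff_zero, eq_comm] at this
  exact mul_ne_zero (Finset.prod_ne_zero_iff.mpr fun k _ => hg k)
    (Matrix.det_vandermonde_ne_zero_iff.mpr hβ) this

lemma eventually_wronskian_mul_pow_ne_zero [CharZero R] {g a : Fin d → R} (hg : ∀ k, g k ≠ 0)
    (ha : ∀ k, a k ≠ 0) (hβ : Function.Injective fun k => logDeriv (a k)) :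
    ∀ᶠ n in Filter.atTop, wronskian (fun k => g k * a k ^ n) ≠ 0 := by
  have hroots := (finite_setOfPred_isRoot (wronskianPoly_ne_zero hβ hg)).preimage
    (Nat.cast_injective (R := R)).injOn
  refine (Nat.cofinite_eq_atTop ▸ hroots.eventually_cofinite_notMem).mono fun n hn => ?_
  rw [wronskian_mul_pow g a ha]
  exact mul_ne_zero (Finset.prod_ne_zero_iff.mpr fun k _ => pow_ne_zero n (ha k)) hn

noncomputable def logWronskian (c : Fin d → R) : R :=
  (Matrix.of fun m k : Fin d => (deriv : R → R)^[m] (c k) / c k).det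

lemma wronskian_eq_prod_mul_logWronskian {c : Fin d → R} (hc : ∀ k, c k ≠ 0) :
    wronskian c = (∏ k, c k) * logWronskian c := by
  rw [logWronskian, ← Matrix.det_mul_row, wronskian]
  congr 1
  ext m k
  simp [mul_div_cancel₀ _ (hc k)]

lemma iterate_deriv_sum {ι : Type*} (s : Finset ι) (c : ι → R) (m : ℕ) :
    (deriv : R → R)^[m] (∑ i ∈ s, c i) = ∑ i ∈ s, (deriv : R → R)^[m] (c i) := by
  induction m with
  | zero => rfl
  | succ m ih => simp only [Function.iterate_succ_apply', ih, map_sum]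

lemma wronskian_update_sum (c : Fin d → R) (i : Fin d) :
    wronskian (Function.update c i (∑ k, c k)) = wronskian c := by
  have hcol := Matrix.det_updateCol_sum (Matrix.of fun m k : Fin d => (deriv : R → R)^[m] (c k))
    i fun _ => 1
  simp only [one_smul, Matrix.of_apply, ← iterate_deriv_sum] at hcol
  rw [wronskian, wronskian, ← hcol]
  congr 1
  ext m k
  rcases eq_or_ne k i with rfl | hk <;> simp [*]

lemma wronskian_mul_eq_mul_logWronskian_update {h : Fin d → R} (hh : ∀ k, h k ≠ 0)
    (hG : ∑ k, h k ≠ 0) (i : Fin d) :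
    wronskian h * h i =
      (∑ k, h k) * (∏ k, h k) * logWronskian (Function.update h i (∑ k, h k)) := by
  classical
  have hupd : ∀ k, Function.update h i (∑ k, h k) k ≠ 0 := fun k => by
    rcases eq_or_ne k i with rfl | hk <;> simp [*]
  rw [← wronskian_update_sum h i, wronskian_eq_prod_mul_logWronskian hupd,
    Finset.prod_update_of_mem (Finset.mem_univ i), Finset.sdiff_singleton_eq_erase,
    ← Finset.mul_prod_erase Finset.univ h (Finset.mem_univ i)]
  ring

lemma mul_logWronskian_update_comm {h : Fin d → R} (hh : ∀ k, h k ≠ 0) (hG : ∑ k, h k ≠ 0)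
    (i j : Fin d) :
    h j * logWronskian (Function.update h i (∑ k, h k)) =
      h i * logWronskian (Function.update h j (∑ k, h k)) := by
  have hP : ∏ k, h k ≠ 0 := Finset.prod_ne_zero_iff.mpr fun k _ => hh k
  refine mul_left_cancel₀ (mul_ne_zero hG hP) ?_
  linear_combination h i * wronskian_mul_eq_mul_logWronskian_update hh hG j -
    h j * wronskian_mul_eq_mul_logWronskian_update hh hG i

lemma logWronskian_update_ne_zero {h : Fin d → R} (hh : ∀ k, h k ≠ 0) (hG : ∑ k, h k ≠ 0)
    (hW : wronskian h ≠ 0) (i : Fin d) :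
    logWronskian (Function.update h i (∑ k, h k)) ≠ 0 :=
  right_ne_zero_of_mul <| wronskian_mul_eq_mul_logWronskian_update hh hG i ▸ mul_ne_zero hW (hh i)

end Differential

namespace AddValuation

variable {R Γ : Type*} [CommRing R] [LinearOrderedAddCommMonoidWithTop Γ] (v : AddValuation R Γ)

lemma map_prod {ι : Type*} (s : Finset ι) (f : ι → R) : v (∏ i ∈ s, f i) = ∑ i ∈ s, v (f i) := by
  classical
  induction s using Finset.induction with
  | empty => simp
  | insert a s ha ih => rw [Finset.prod_insert ha, Finset.sum_insert ha, v.map_mul, ih]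

lemma card_nsmul_le_map_det {n : Type*} [Fintype n] [DecidableEq n] (A : Matrix n n R) {b : Γ}
    (h : ∀ i j, b ≤ v (A i j)) : Fintype.card n • b ≤ v A.det := by
  rw [Matrix.det_apply]
  refine v.map_le_sum fun σ _ => ?_
  have hprod : Fintype.card n • b ≤ v (∏ i, A (σ i) i) := by
    rw [v.map_prod, ← Finset.card_univ, ← Finset.sum_const]
    exact Finset.sum_le_sum fun i _ => h _ _
  rcases Int.units_eq_one_or (Equiv.Perm.sign σ) with hs | hs <;> simpa [hs, v.map_neg] using hprod

end AddValuation

noncomputable def polyOrd : Option ℂ → ℂ[X] → ℤ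
  | some c, p => p.rootMultiplicity c
  | none, p => -p.natDegree

/-- How much `d/dX` can shift the order at a place: it lowers the order at a finite place by at
most one and raises the order at infinity by at least one. -/
def derivShift : Option ℂ → ℤ
  | some _ => -1
  | none => 1

lemma polyOrd_mul (v : Option ℂ) {p q : ℂ[X]} (hp : p ≠ 0) (hq : q ≠ 0) :
    polyOrd v (p * q) = polyOrd v p + polyOrd v q := by
  cases v with
  | some c => simp [polyOrd, rootMultiplicity_mul (mul_ne_zero hp hq)]
  | none => simp [polyOrd, natDegree_mul hp hq]; ring

lemma min_polyOrd_le_polyOrd_add (v : Option ℂ) {p q : ℂ[X]} (h : p + q ≠ 0) :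
    min (polyOrd v p) (polyOrd v q) ≤ polyOrd v (p + q) := by
  cases v with
  | some c =>
    have := rootMultiplicity_add (p := p) (q := q) c h
    simp only [polyOrd]
    omega
  | none =>
    have := natDegree_add_le p q
    simp only [polyOrd]
    omega

lemma polyOrd_add_derivShift_le (v : Option ℂ) {p : ℂ[X]} (hp : derivative p ≠ 0) :
    polyOrd v p + derivShift v ≤ polyOrd v (derivative p) := by
  cases v with
  | some c =>
    have := rootMultiplicity_sub_one_le_derivative_rootMultiplicity_of_ne_zero p c hp
    simp only [polyOrd, derivShift]
    omega
  | none =>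
    have := natDegree_derivative_lt (p := p) fun h => hp (derivative_eq_zero.mpr h)
    simp only [polyOrd, derivShift]
    omega

lemma nu_eq_polyOrd_sub (v : Option ℂ) (f : RatFunc ℂ) :
    nu v f = polyOrd v f.num - polyOrd v f.denom := by
  cases v <;> simp [nu, polyOrd]; ring

lemma nu_div_algebraMap (v : Option ℂ) {p q : ℂ[X]} (hp : p ≠ 0) (hq : q ≠ 0) :
    nu v (algebraMap ℂ[X] (RatFunc ℂ) p / algebraMap ℂ[X] (RatFunc ℂ) q) =
      polyOrd v p - polyOrd v q := by
  set f := algebraMap ℂ[X] (RatFunc ℂ) p / algebraMap ℂ[X] (RatFunc ℂ) q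
  have hf : f ≠ 0 := div_ne_zero (RatFunc.algebraMap_ne_zero hp) (RatFunc.algebraMap_ne_zero hq)
  have hcross : f.num * q = p * f.denom := (RatFunc.num_mul_eq_mul_denom_iff hq).mpr rfl
  replace hcross := congrArg (polyOrd v) hcross
  rw [polyOrd_mul v (RatFunc.num_ne_zero hf) hq, polyOrd_mul v hp f.denom_ne_zero] at hcross
  rw [nu_eq_polyOrd_sub]
  omega

lemma nu_zero (v : Option ℂ) : nu v 0 = 0 := by
  cases v <;> simp [nu]

lemma nu_one (v : Option ℂ) : nu v 1 = 0 := by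
  cases v <;> simp [nu]

lemma nu_mul (v : Option ℂ) {f g : RatFunc ℂ} (hf : f ≠ 0) (hg : g ≠ 0) :
    nu v (f * g) = nu v f + nu v g := by
  conv_lhs => rw [← RatFunc.num_div_denom f, ← RatFunc.num_div_denom g, div_mul_div_comm,
    ← map_mul, ← map_mul]
  rw [nu_div_algebraMap v (mul_ne_zero (RatFunc.num_ne_zero hf) (RatFunc.num_ne_zero hg))
      (mul_ne_zero f.denom_ne_zero g.denom_ne_zero),
    polyOrd_mul v (RatFunc.num_ne_zero hf) (RatFunc.num_ne_zero hg),
    polyOrd_mul v f.denom_ne_zero g.denom_ne_zero, nu_eq_polyOrd_sub, nu_eq_polyOrd_sub]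
  ring

lemma min_nu_le_nu_add (v : Option ℂ) {f g : RatFunc ℂ} (hf : f ≠ 0) (hg : g ≠ 0)
    (hfg : f + g ≠ 0) : min (nu v f) (nu v g) ≤ nu v (f + g) := by
  have hN := RatFunc.num_mul_denom_add_denom_mul_num_ne_zero hfg
  have hsum : f + g = algebraMap ℂ[X] (RatFunc ℂ) (f.num * g.denom + f.denom * g.num) /
      algebraMap ℂ[X] (RatFunc ℂ) (f.denom * g.denom) := by
    conv_lhs => rw [← RatFunc.num_div_denom f, ← RatFunc.num_div_denom g]
    rw [div_add_div _ _ (RatFunc.algebraMap_ne_zero f.denom_ne_zero)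
      (RatFunc.algebraMap_ne_zero g.denom_ne_zero)]
    simp only [map_add, map_mul]
  have hmin := min_polyOrd_le_polyOrd_add v hN
  rw [polyOrd_mul v (RatFunc.num_ne_zero hf) g.denom_ne_zero,
    polyOrd_mul v f.denom_ne_zero (RatFunc.num_ne_zero hg)] at hmin
  rw [hsum, nu_div_algebraMap v hN (mul_ne_zero f.denom_ne_zero g.denom_ne_zero),
    polyOrd_mul v f.denom_ne_zero g.denom_ne_zero, nu_eq_polyOrd_sub, nu_eq_polyOrd_sub]
  omega

lemma nu_inv (v : Option ℂ) (f : RatFunc ℂ) : nu v f⁻¹ = -nu v f := by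
  rcases eq_or_ne f 0 with rfl | hf
  · simp [nu_zero]
  · conv_lhs => rw [← RatFunc.num_div_denom f, inv_div]
    rw [nu_div_algebraMap v f.denom_ne_zero (RatFunc.num_ne_zero hf), nu_eq_polyOrd_sub]
    ring

lemma nu_pow (v : Option ℂ) {f : RatFunc ℂ} (hf : f ≠ 0) (n : ℕ) :
    nu v (f ^ n) = n * nu v f := by
  induction n with
  | zero => cases v <;> simp [nu]
  | succ n ih => rw [pow_succ, nu_mul v (pow_ne_zero n hf) hf, ih]; push_cast; ring

open Classical in
noncomputable def ordAt (v : Option ℂ) : AddValuation (RatFunc ℂ) (WithTop ℤ) :=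
  AddValuation.of (fun f => if f = 0 then ⊤ else (nu v f : WithTop ℤ)) (by simp)
    (by simp [nu_one])
    (fun f g => by
      rcases eq_or_ne f 0 with rfl | hf
      · simp
      rcases eq_or_ne g 0 with rfl | hg
      · simp
      rcases eq_or_ne (f + g) 0 with hfg | hfg
      · simp [hfg]
      simp only [hf, hg, hfg, if_false]
      exact_mod_cast min_nu_le_nu_add v hf hg hfg)
    (fun f g => by
      rcases eq_or_ne f 0 with rfl | hf
      · simp
      rcases eq_or_ne g 0 with rfl | hg
      · simp
      simp only [hf, hg, mul_ne_zero hf hg, if_false, nu_mul v hf hg]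
      push_cast
      rfl)

lemma ordAt_of_ne_zero (v : Option ℂ) {f : RatFunc ℂ} (hf : f ≠ 0) : ordAt v f = nu v f := by
  simp [ordAt, hf]

-- At `f = 0` both sides hold, by `ordAt v 0 = ⊤` and the junk value `nu v 0 = 0 ≥ b`.
lemma coe_le_ordAt_iff (v : Option ℂ) (f : RatFunc ℂ) {b : ℤ} (hb : b ≤ 0) :
    (b : WithTop ℤ) ≤ ordAt v f ↔ b ≤ nu v f := by
  rcases eq_or_ne f 0 with rfl | hf
  · simp [nu_zero, hb]
  · rw [ordAt_of_ne_zero v hf, WithTop.coe_le_coe]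

lemma ordAt_algebraMap (v : Option ℂ) {p : ℂ[X]} (hp : p ≠ 0) :
    ordAt v (algebraMap ℂ[X] (RatFunc ℂ) p) = polyOrd v p := by
  have := nu_div_algebraMap v hp one_ne_zero
  rw [map_one, div_one] at this
  have hone : polyOrd v 1 = 0 := by cases v <;> simp [polyOrd, rootMultiplicity_eq_zero]
  rw [ordAt_of_ne_zero v (RatFunc.algebraMap_ne_zero hp), this, hone, sub_zero]

lemma ordAt_algebraMap_add_derivShift_le (v : Option ℂ) (p : ℂ[X]) :
    ordAt v (algebraMap ℂ[X] (RatFunc ℂ) p) + derivShift v ≤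
      ordAt v (algebraMap ℂ[X] (RatFunc ℂ) (derivative p)) := by
  rcases eq_or_ne (derivative p) 0 with hp' | hp'
  · simp [hp']
  have hp : p ≠ 0 := fun h => hp' (by simp [h])
  rw [ordAt_algebraMap v hp, ordAt_algebraMap v hp']
  exact_mod_cast polyOrd_add_derivShift_le v hp'

lemma ordAt_add_derivShift_le_ordAt_deriv (v : Option ℂ) (f : RatFunc ℂ) :
    ordAt v f + derivShift v ≤ ordAt v f′ := by
  rcases eq_or_ne f 0 with rfl | hf
  · simp
  set a := algebraMap ℂ[X] (RatFunc ℂ) f.num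
  set b := algebraMap ℂ[X] (RatFunc ℂ) f.denom
  have hf' : f′ = (algebraMap ℂ[X] (RatFunc ℂ) (derivative f.num) * b -
      a * algebraMap ℂ[X] (RatFunc ℂ) (derivative f.denom)) / b ^ 2 := by
    rw [RatFunc.deriv_apply, RatFunc.derivAux, map_sub, map_mul, map_mul, map_pow]
  have hN : ordAt v a + ordAt v b + derivShift v ≤ ordAt v (algebraMap ℂ[X] (RatFunc ℂ)
      (derivative f.num) * b - a * algebraMap ℂ[X] (RatFunc ℂ) (derivative f.denom)) := by
    refine le_trans (le_min ?_ ?_) ((ordAt v).map_sub _ _) <;> rw [AddValuation.map_mul]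
    · rw [add_right_comm]
      exact add_le_add_left (ordAt_algebraMap_add_derivShift_le v f.num) _
    · rw [add_assoc]
      exact add_le_add_right (ordAt_algebraMap_add_derivShift_le v f.denom) _
  conv_lhs => rw [← RatFunc.num_div_denom f]
  rw [hf', AddValuation.map_div, AddValuation.map_div, AddValuation.map_pow]
  rw [ordAt_algebraMap v (RatFunc.num_ne_zero hf), ordAt_algebraMap v f.denom_ne_zero] at *
  revert hN
  induction ordAt v _ using WithTop.recTopCoe with
  | top => simp
  | coe x =>
    intro hN
    norm_cast at hN ⊢
    rw [nsmul_eq_mul]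
    push_cast
    omega

lemma denom_rootMultiplicity_eq_zero_of_nu_nonneg {f : RatFunc ℂ} {c : ℂ} (h : 0 ≤ nu (some c) f) :
    f.denom.rootMultiplicity c = 0 := by
  by_contra hc
  have hnum : 0 < f.num.rootMultiplicity c := by simp only [nu] at h; omega
  have hdvd : ∀ p : ℂ[X], 0 < p.rootMultiplicity c → X - C c ∣ p := fun p hp =>
    (dvd_pow_self _ hp.ne').trans (pow_rootMultiplicity_dvd p c)
  exact not_isUnit_X_sub_C c ((RatFunc.isCoprime_num_denom f).isUnit_of_dvd'
    (hdvd _ hnum) (hdvd _ (Nat.pos_of_ne_zero hc)))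

lemma ordAt_deriv_nonneg (v : Option ℂ) {f : RatFunc ℂ} (h : 0 ≤ ordAt v f) :
    0 ≤ ordAt v f′ := by
  rcases eq_or_ne f 0 with rfl | hf
  · simp
  cases v with
  | none =>
    refine le_trans ?_ (ordAt_add_derivShift_le_ordAt_deriv none f)
    exact h.trans (le_add_of_nonneg_right (by simp [derivShift]))
  | some c =>
    rw [ordAt_of_ne_zero _ hf, WithTop.coe_nonneg] at h
    have hden : ordAt (some c) (algebraMap ℂ[X] (RatFunc ℂ) f.denom) = 0 := by
      rw [ordAt_algebraMap _ f.denom_ne_zero, polyOrd,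
        denom_rootMultiplicity_eq_zero_of_nu_nonneg h]
      rfl
    rw [RatFunc.deriv_apply, RatFunc.derivAux, AddValuation.map_div, map_pow,
      AddValuation.map_pow, hden, nsmul_zero, sub_zero]
    rcases eq_or_ne (derivative f.num * f.denom - f.num * derivative f.denom) 0 with h0 | h0
    · simp [h0]
    · rw [ordAt_algebraMap _ h0, WithTop.coe_nonneg]
      exact Int.natCast_nonneg _

local notation "D^[" m "]" => (Differential.deriv : RatFunc ℂ → RatFunc ℂ)^[m]

lemma ordAt_le_ordAt_deriv_add_one (v : Option ℂ) (f : RatFunc ℂ) :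
    ordAt v f ≤ ordAt v f′ + 1 := calc
  ordAt v f ≤ ordAt v f + (derivShift v + 1 : ℤ) :=
    le_add_of_nonneg_right (WithTop.coe_nonneg.mpr (by cases v <;> simp [derivShift]))
  _ = ordAt v f + derivShift v + 1 := by push_cast; rw [add_assoc]
  _ ≤ ordAt v f′ + 1 := by gcongr; exact ordAt_add_derivShift_le_ordAt_deriv v f

lemma ordAt_le_ordAt_iterate_deriv_add (v : Option ℂ) (f : RatFunc ℂ) (m : ℕ) :
    ordAt v f ≤ ordAt v (D^[m] f) + m := by
  induction m with
  | zero => simp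
  | succ m ih =>
    rw [Function.iterate_succ_apply', Nat.cast_succ, add_comm (m : WithTop ℤ), ← add_assoc]
    exact ih.trans (by gcongr; exact ordAt_le_ordAt_deriv_add_one v _)

lemma ordAt_iterate_deriv_nonneg (v : Option ℂ) {f : RatFunc ℂ} (h : 0 ≤ ordAt v f) (m : ℕ) :
    0 ≤ ordAt v (D^[m] f) := by
  induction m with
  | zero => exact h
  | succ m ih => rw [Function.iterate_succ_apply']; exact ordAt_deriv_nonneg v ih

lemma neg_le_ordAt_iterate_deriv_div (v : Option ℂ) {c : RatFunc ℂ} (hc : c ≠ 0) (m : ℕ) :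
    ((-m : ℤ) : WithTop ℤ) ≤ ordAt v (D^[m] c / c) := by
  have := ordAt_le_ordAt_iterate_deriv_add v c m
  rw [AddValuation.map_div, ordAt_of_ne_zero v hc] at *
  revert this
  induction ordAt v (D^[m] c) using WithTop.recTopCoe with
  | top => simp
  | coe x => intro h; norm_cast at h ⊢; omega

lemma ordAt_iterate_deriv_div_nonneg (v : Option ℂ) {c : RatFunc ℂ} (hc : c ≠ 0)
    (hv : nu v c = 0) (m : ℕ) : 0 ≤ ordAt v (D^[m] c / c) := by
  have h0 : ordAt v c = 0 := by rw [ordAt_of_ne_zero v hc, hv]; rfl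
  rw [AddValuation.map_div, h0, sub_zero]
  exact ordAt_iterate_deriv_nonneg v h0.ge m

lemma sum_rootMultiplicity_eq_natDegree {p : ℂ[X]} {T : Finset ℂ} (hT : p.roots.toFinset ⊆ T) :
    ∑ c ∈ T, p.rootMultiplicity c = p.natDegree := by
  simp_rw [← count_roots]
  rw [Multiset.sum_count_eq_card fun a ha => hT (Multiset.mem_toFinset.mpr ha),
    IsAlgClosed.card_roots_eq_natDegree]

noncomputable def nuSupport (f : RatFunc ℂ) : Finset (Option ℂ) :=
  insert none ((f.num.roots.toFinset ∪ f.denom.roots.toFinset).image some)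

lemma nu_eq_zero_of_notMem_nuSupport {v : Option ℂ} {f : RatFunc ℂ} (hv : v ∉ nuSupport f) :
    nu v f = 0 := by
  cases v with
  | none => exact absurd (Finset.mem_insert_self _ _) hv
  | some c =>
    have hroot : ∀ p : ℂ[X], c ∉ p.roots.toFinset → p.rootMultiplicity c = 0 := fun p hp => by
      rw [← count_roots, Multiset.count_eq_zero]
      exact fun h => hp (Multiset.mem_toFinset.mpr h)
    simp only [nuSupport, Finset.mem_insert, Finset.mem_image, Finset.mem_union,
      not_exists, not_and, reduceCtorEq, false_or, Option.some.injEq] at hv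
    simp [nu, hroot _ fun h => hv c (Or.inl h) rfl, hroot _ fun h => hv c (Or.inr h) rfl]

-- The degree formula: zeros and poles, counted with multiplicity, balance out.
lemma sum_nu_eq_zero {f : RatFunc ℂ} {T : Finset (Option ℂ)} (hT : nuSupport f ⊆ T) :
    ∑ v ∈ T, nu v f = 0 := by
  rw [← Finset.sum_subset hT fun v _ hv => nu_eq_zero_of_notMem_nuSupport hv, nuSupport,
    Finset.sum_insert (by simp), Finset.sum_image (by simp)]
  simp only [nu, Finset.sum_sub_distrib]
  rw [← Nat.cast_sum, ← Nat.cast_sum, sum_rootMultiplicity_eq_natDegree Finset.subset_union_left,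
    sum_rootMultiplicity_eq_natDegree Finset.subset_union_right]
  ring

lemma H_eq_sum {f : RatFunc ℂ} {T : Finset (Option ℂ)} (hT : nuSupport f ⊆ T) :
    H f = -∑ v ∈ T, min 0 (nu v f) := by
  rw [H, finsum_eq_sum_of_support_subset _ fun v hv => Finset.mem_coe.mpr (hT (by_contra fun h =>
    hv (by rw [nu_eq_zero_of_notMem_nuSupport h, min_self])))]

lemma H_nonneg (f : RatFunc ℂ) : 0 ≤ H f := by
  rw [H_eq_sum subset_rfl, neg_nonneg]
  exact Finset.sum_nonpos fun v _ => min_le_left 0 _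

lemma H_mul_le {f g : RatFunc ℂ} (hf : f ≠ 0) (hg : g ≠ 0) : H (f * g) ≤ H f + H g := by
  classical
  set T := nuSupport f ∪ nuSupport g ∪ nuSupport (f * g)
  rw [H_eq_sum (T := T) Finset.subset_union_right,
    H_eq_sum (T := T) (Finset.subset_union_left.trans Finset.subset_union_left),
    H_eq_sum (T := T) (Finset.subset_union_right.trans Finset.subset_union_left),
    ← neg_add, neg_le_neg_iff, ← Finset.sum_add_distrib]
  refine Finset.sum_le_sum fun v _ => ?_
  rw [nu_mul v hf hg]
  omega

lemma H_inv (f : RatFunc ℂ) : H f⁻¹ = H f := by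
  classical
  set T := nuSupport f ∪ nuSupport f⁻¹
  rw [H_eq_sum (T := T) Finset.subset_union_right, H_eq_sum (T := T) Finset.subset_union_left]
  have hterm : ∀ v ∈ T, min 0 (nu v f⁻¹) = min 0 (nu v f) - nu v f := fun v _ => by
    rw [nu_inv]
    omega
  rw [Finset.sum_congr rfl hterm, Finset.sum_sub_distrib, sum_nu_eq_zero Finset.subset_union_left,
    sub_zero]

lemma H_pow {f : RatFunc ℂ} (hf : f ≠ 0) (n : ℕ) : H (f ^ n) = n * H f := by
  classical
  set T := nuSupport f ∪ nuSupport (f ^ n)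
  rw [H_eq_sum (T := T) Finset.subset_union_right, H_eq_sum (T := T) Finset.subset_union_left,
    mul_neg, Finset.mul_sum]
  congr 1
  refine Finset.sum_congr rfl fun v _ => ?_
  rw [nu_pow v hf n, mul_min_of_nonneg _ _ (Int.natCast_nonneg n), mul_zero]

lemma H_div_le {f g : RatFunc ℂ} (hf : f ≠ 0) (hg : g ≠ 0) : H (f / g) ≤ H f + H g := by
  rw [div_eq_mul_inv, ← H_inv g]
  exact H_mul_le hf (inv_ne_zero hg)

lemma eq_C_of_forall_nu_nonneg {f : RatFunc ℂ} (h : ∀ v, 0 ≤ nu v f) :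
    ∃ c : ℂ, f = RatFunc.C c := by
  have hdenom : f.denom = 1 := by
    refine f.monic_denom.natDegree_eq_zero.mp (by_contra fun hne => ?_)
    obtain ⟨c, hc⟩ := Complex.exists_root (natDegree_pos_iff_degree_pos.mp (Nat.pos_of_ne_zero hne))
    exact ((rootMultiplicity_pos f.denom_ne_zero).mpr hc).ne'
      (denom_rootMultiplicity_eq_zero_of_nu_nonneg (h (some c)))
  have hnum : f.num.natDegree = 0 := by
    have := h none
    simp only [nu, hdenom, natDegree_one] at this
    omega
  obtain ⟨c, hc⟩ := natDegree_eq_zero.mp hnum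
  exact ⟨c, by rw [← RatFunc.num_div_denom f, hdenom, ← hc, map_one, div_one, RatFunc.algebraMap_C]⟩

lemma one_le_H {f : RatFunc ℂ} (hf : ∀ c : ℂ, f ≠ RatFunc.C c) : 1 ≤ H f := by
  by_contra! hH
  have hsum : ∑ v ∈ nuSupport f, min 0 (nu v f) = 0 := by
    linarith [H_eq_sum (f := f) subset_rfl, H_nonneg f]
  have hterm := (Finset.sum_eq_zero_iff_of_nonpos fun v _ => min_le_left 0 (nu v f)).mp hsum
  obtain ⟨c, hc⟩ := eq_C_of_forall_nu_nonneg fun v => by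
    by_cases hv : v ∈ nuSupport f
    · exact min_eq_left_iff.mp (hterm v hv)
    · rw [nu_eq_zero_of_notMem_nuSupport hv]
  exact hf c hc

lemma H_le_of_nu_bounds {f : RatFunc ℂ} (S : Finset (Option ℂ)) {B : ℤ} (hB : 0 ≤ B)
    (hS : ∀ v ∉ S, 0 ≤ nu v f) (hB' : ∀ v, -B ≤ nu v f) : H f ≤ B * S.card := by
  classical
  rw [H_eq_sum (T := nuSupport f ∪ S) Finset.subset_union_left, ← Finset.sum_neg_distrib]
  calc ∑ v ∈ nuSupport f ∪ S, -min 0 (nu v f)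
      ≤ ∑ v ∈ nuSupport f ∪ S, if v ∈ S then B else 0 := Finset.sum_le_sum fun v _ => by
        split_ifs with hv
        · have := hB' v; omega
        · have := hS v hv; omega
    _ = B * S.card := by
      rw [Finset.sum_ite_mem, Finset.union_inter_cancel_right, Finset.sum_const, nsmul_eq_mul,
        mul_comm]

lemma H_logWronskian_le {d : ℕ} {c : Fin d → RatFunc ℂ} (hc : ∀ k, c k ≠ 0)
    {S : Finset (Option ℂ)} (hS : ∀ k, ∀ v ∉ S, nu v (c k) = 0) :
    H (Differential.logWronskian c) ≤ d * d * S.card := by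
  refine H_le_of_nu_bounds S (by positivity) (fun v hv => ?_) (fun v => ?_)
  · rw [← coe_le_ordAt_iff v _ le_rfl]
    have := (ordAt v).card_nsmul_le_map_det (Matrix.of fun m k : Fin d => D^[m] (c k) / c k)
      fun m k => ordAt_iterate_deriv_div_nonneg v (hc k) (hS k v hv) m
    rwa [smul_zero] at this
  · rw [← coe_le_ordAt_iff v _ (by simp; positivity)]
    have hentry : ∀ m k : Fin d, ((-d : ℤ) : WithTop ℤ) ≤ ordAt v (D^[m] (c k) / c k) :=
      fun m k => le_trans (WithTop.coe_le_coe.mpr (by have := m.is_lt; omega))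
        (neg_le_ordAt_iterate_deriv_div v (hc k) m)
    have := (ordAt v).card_nsmul_le_map_det (Matrix.of fun m k : Fin d => D^[m] (c k) / c k)
      hentry
    rwa [Fintype.card_fin, ← WithTop.coe_nsmul, smul_neg, nsmul_eq_mul] at this

lemma le_H_of_wronskian_ne_zero {d : ℕ} {α f : Fin d → RatFunc ℂ} (hα : ∀ i, α i ≠ 0)
    (hf : ∀ i, f i ≠ 0) {S : Finset (Option ℂ)}
    (hS : ∀ i, ∀ v ∉ S, nu v (α i) = 0 ∧ nu v (f i) = 0) {n : ℕ}
    (hW : Differential.wronskian (fun k => f k * α k ^ n) ≠ 0)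
    (hG : ∑ k, f k * α k ^ n ≠ 0) (hGS : ∀ v ∉ S, nu v (∑ k, f k * α k ^ n) = 0)
    {i j : Fin d} (hij : ∀ c : ℂ, α i / α j ≠ RatFunc.C c) :
    (n : ℤ) ≤ H (f i) + H (f j) + 2 * (d * d * S.card) := by
  set h : Fin d → RatFunc ℂ := fun k => f k * α k ^ n
  have hh : ∀ k, h k ≠ 0 := fun k => mul_ne_zero (hf k) (pow_ne_zero n (hα k))
  have hhS : ∀ k, ∀ v ∉ S, nu v (h k) = 0 := fun k v hv => by
    rw [nu_mul v (hf k) (pow_ne_zero n (hα k)), nu_pow v (hα k), (hS k v hv).1, (hS k v hv).2]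
    ring
  set L : Fin d → RatFunc ℂ := fun k => Differential.logWronskian (Function.update h k (∑ k, h k))
  have hL0 : ∀ k, L k ≠ 0 := Differential.logWronskian_update_ne_zero hh hG hW
  have hLH : ∀ k, H (L k) ≤ d * d * S.card := fun k => H_logWronskian_le
    (fun l => by rcases eq_or_ne l k with rfl | hl <;> simp [*])
    (fun l v hv => by rcases eq_or_ne l k with rfl | hl <;> simp [*])
  have hrel : f j * α j ^ n * L i = f i * α i ^ n * L j :=
    Differential.mul_logWronskian_update_comm hh hG i j
  have hratio : (α i / α j) ^ n = f j * L i / (f i * L j) := by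
    rw [div_pow, div_eq_div_iff (pow_ne_zero n (hα j)) (mul_ne_zero (hf i) (hL0 j))]
    linear_combination -hrel
  have hαij : α i / α j ≠ 0 := div_ne_zero (hα i) (hα j)
  calc (n : ℤ) ≤ n * H (α i / α j) := le_mul_of_one_le_right (by positivity) (one_le_H hij)
    _ = H (f j * L i / (f i * L j)) := by rw [← H_pow hαij, hratio]
    _ ≤ H (f j) + H (L i) + (H (f i) + H (L j)) :=
      (H_div_le (mul_ne_zero (hf j) (hL0 i)) (mul_ne_zero (hf i) (hL0 j))).trans
        (add_le_add (H_mul_le (hf j) (hL0 i)) (H_mul_le (hf i) (hL0 j)))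
    _ ≤ H (f i) + H (f j) + 2 * (d * d * S.card) := by linarith [hLH i, hLH j]

theorem sunits_in_recurrence_bounded (d : ℕ) (hd : 2 ≤ d) (α f : Fin d → RatFunc ℂ)
    (hα : ∀ i, α i ≠ 0) (hf : ∀ i, f i ≠ 0)
    (hnd : ∀ i j, i ≠ j → ∀ c : ℂ, α i / α j ≠ RatFunc.C c)
    (S : Finset (Option ℂ))
    (hS : ∀ i, ∀ v ∉ S, nu v (α i) = 0 ∧ nu v (f i) = 0) :
    ∃ C : ℕ, ∀ n : ℕ,
      ((∑ i, f i * α i ^ n) ≠ 0 ∧ ∀ v ∉ S, nu v (∑ i, f i * α i ^ n) = 0) → n ≤ C := by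
  obtain ⟨N, hN⟩ := Filter.eventually_atTop.mp
    (Differential.eventually_wronskian_mul_pow_ne_zero hf hα (RatFunc.injective_logDeriv hα hnd))
  let i : Fin d := ⟨0, by omega⟩
  let j : Fin d := ⟨1, by omega⟩
  refine ⟨max N (H (f i) + H (f j) + 2 * (d * d * S.card)).toNat, fun n ⟨hG, hGS⟩ => ?_⟩
  rcases lt_or_ge n N with hn | hn
  · exact (le_max_left _ _).trans' hn.le
  have := le_H_of_wronskian_ne_zero hα hf hS (hN n hn) hG hGS
    (hnd i j (by simp [i, j, Fin.ext_iff]))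
  omega
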